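/- For d ≥ 1 and ℓ ≥ 3, the number n_{d,ℓ} of cyclic-Kautz sequences of length ℓ satisfies the recurrence n_{d,ℓ} = d^ℓ + d^(ℓ−1) − n_{d,ℓ−1}, where n_{d,ℓ} counts sequences x₁…x_ℓ over Z_{d+1} with consecutive entries distinct and x₁ ≠ x_ℓ. -/

import Mathlib

/-- `nCK d ℓ`: the number of cyclic-Kautz sequences of length `ℓ` over `Z_{d+1}`,
i.e. sequences with consecutive entries distinct and first entry distinct from last. -/
def nCK (d ℓ : ℕ) : ℕ :=
  Fintype.card {x : Fin ℓ → Fin (d + 1) //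
    (∀ i j : Fin ℓ, j.val = i.val + 1 → x i ≠ x j) ∧
    (∀ i j : Fin ℓ, i.val = 0 → j.val = ℓ - 1 → x i ≠ x j)}

/-!
A Kautz sequence of length `n + 2` (consecutive entries distinct) is either cyclic-Kautz, or
its first and last entries agree, in which case dropping the last entry leaves a cyclic-Kautz
sequence of length `n + 1`. Appending one entry to a Kautz sequence leaves `d` choices, so there
are `(d + 1) * d ^ (n + 1)` Kautz sequences of length `n + 2`, whence
`n_{d,n+2} + n_{d,n+1} = d ^ (n + 2) + d ^ (n + 1)`.
-/

open Fin

namespace Kautz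

variable {α : Type*} {n : ℕ}

def IsKautz (x : Fin (n + 1) → α) : Prop := ∀ i : Fin n, x i.castSucc ≠ x i.succ

instance [DecidableEq α] : DecidablePred (IsKautz (α := α) (n := n)) :=
  fun _ => inferInstanceAs (Decidable (∀ _, _))

theorem isKautz_snoc_iff {x : Fin (n + 1) → α} {a : α} :
    IsKautz (snoc x a : Fin (n + 2) → α) ↔ IsKautz x ∧ x (last n) ≠ a := by
  simp only [IsKautz, forall_fin_succ', succ_castSucc, snoc_castSucc, succ_last, snoc_last]

theorem isKautz_iff_init {x : Fin (n + 2) → α} :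
    IsKautz x ↔ IsKautz (init x) ∧ x (last n).castSucc ≠ x (last (n + 1)) := by
  conv_lhs => rw [← snoc_init_self x]
  exact isKautz_snoc_iff

def snocEquiv : {x : Fin (n + 2) → α // IsKautz x} ≃
    Σ y : {y : Fin (n + 1) → α // IsKautz y}, {a // y.1 (last n) ≠ a} where
  toFun x :=
    ⟨⟨init x.1, (isKautz_iff_init.1 x.2).1⟩, x.1 (last _), (isKautz_iff_init.1 x.2).2⟩
  invFun p := ⟨snoc p.1.1 p.2.1, isKautz_snoc_iff.2 ⟨p.1.2, p.2.2⟩⟩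
  left_inv x := Subtype.ext (snoc_init_self x.1)
  right_inv _ :=
    Sigma.subtype_ext (Subtype.ext (init_snoc (α := fun _ => α) _ _))
      (snoc_last (α := fun _ => α) _ _)

theorem card_isKautz [Fintype α] [DecidableEq α] (n : ℕ) :
    Fintype.card {x : Fin (n + 1) → α // IsKautz x} =
      Fintype.card α * (Fintype.card α - 1) ^ n := by
  induction n with
  | zero => simp [IsKautz]
  | succ n ih =>
    rw [Fintype.card_congr snocEquiv, Fintype.card_sigma]
    simp only [Fintype.card_subtype_compl, Fintype.card_unique]
    simp [ih, pow_succ, mul_assoc]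

def closedEquivCyclic : {x : Fin (n + 2) → α // IsKautz x ∧ x 0 = x (last (n + 1))} ≃
    {y : Fin (n + 1) → α // IsKautz y ∧ y 0 ≠ y (last n)} where
  toFun x := ⟨init x.1, (isKautz_iff_init.1 x.2.1).1, by
    simpa [init, x.2.2] using (isKautz_iff_init.1 x.2.1).2.symm⟩
  invFun y := ⟨snoc y.1 (y.1 0), isKautz_snoc_iff.2 ⟨y.2.1, y.2.2.symm⟩, by
    rw [snoc_last]; exact snoc_castSucc (i := 0) ..⟩
  left_inv x := Subtype.ext <| by
    conv_rhs => rw [← snoc_init_self x.1, ← x.2.2]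
    rfl
  right_inv y := Subtype.ext (init_snoc (α := fun _ => α) _ _)

theorem card_isKautz_eq_add [Fintype α] [DecidableEq α] (n : ℕ) :
    Fintype.card {x : Fin (n + 2) → α // IsKautz x} =
      Fintype.card {x : Fin (n + 2) → α // IsKautz x ∧ x 0 ≠ x (last (n + 1))} +
        Fintype.card {y : Fin (n + 1) → α // IsKautz y ∧ y 0 ≠ y (last n)} := by
  rw [← Fintype.card_congr (closedEquivCyclic (n := n)), ← Fintype.card_subtype_or_disjoint]
  · exact Fintype.card_congr (Equiv.subtypeEquivRight fun x => by tauto)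
  · exact fun r hne heq x hx => (hne x hx).2 (heq x hx).2

theorem isKautz_iff_forall_val {x : Fin (n + 1) → α} :
    IsKautz x ↔ ∀ i j : Fin (n + 1), j.val = i.val + 1 → x i ≠ x j := by
  refine ⟨fun h i j hij => ?_, fun h i => h _ _ (val_succ i)⟩
  have hi : i.val < n := by omega
  obtain rfl : j = (⟨i, hi⟩ : Fin n).succ := Fin.ext hij
  exact h ⟨i, hi⟩

end Kautz

open Kautz in
theorem nCK_succ_eq_card (d n : ℕ) :
    nCK d (n + 1) =
      Fintype.card {x : Fin (n + 1) → Fin (d + 1) // IsKautz x ∧ x 0 ≠ x (last n)} := by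
  refine Fintype.card_congr <|
    Equiv.subtypeEquivRight fun x => and_congr isKautz_iff_forall_val.symm ?_
  refine ⟨fun h => h 0 (last n) rfl (by simp), ?_⟩
  intro h i j hi hj
  obtain rfl : i = 0 := Fin.ext hi
  obtain rfl : j = last n := Fin.ext (by simpa using hj)
  exact h

theorem nCK_add_nCK (d n : ℕ) : nCK d (n + 2) + nCK d (n + 1) = (d + 1) * d ^ (n + 1) := by
  rw [nCK_succ_eq_card, nCK_succ_eq_card, ← Kautz.card_isKautz_eq_add, Kautz.card_isKautz,
    Fintype.card_fin, Nat.add_sub_cancel]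

theorem stmt2 (d ℓ : ℕ) (hℓ : 3 ≤ ℓ) :
    (nCK d ℓ : ℤ) = (d : ℤ) ^ ℓ + (d : ℤ) ^ (ℓ - 1) - nCK d (ℓ - 1) := by
  obtain ⟨n, rfl⟩ := Nat.exists_eq_add_of_le' hℓ
  have h := congrArg (Nat.cast : ℕ → ℤ) (nCK_add_nCK d (n + 1))
  push_cast at h
  rw [show n + 3 - 1 = n + 2 from rfl]
  linear_combination h
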